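/- Let ν_⊗ be the product measure on [-π/2,π/2]² with density (1/2) cos x cos y dx dy. Then both marginals of ν_⊗ equal γ (dγ = cos φ dφ), ν_⊗ is symmetric under coordinate swap, and for every λ > 0 the moment of resistance satisfies R_I[ν_⊗, λ] = -3λ/4. -/

import Mathlib

open Real MeasureTheory

noncomputable def gammaM : Measure ℝ :=
  (volume.restrict (Set.Icc (-(π/2)) (π/2))).withDensity
    (fun φ => ENNReal.ofReal (Real.cos φ))

/-- the product measure `ν_⊗` with density `(1/2) cos x cos y` on the square. -/
noncomputable def nuProd : Measure (ℝ × ℝ) :=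
  (volume.restrict ((Set.Icc (-(π/2)) (π/2)) ×ˢ (Set.Icc (-(π/2)) (π/2)))).withDensity
    (fun p => ENNReal.ofReal ((1/2) * Real.cos p.1 * Real.cos p.2))

noncomputable def zeta (x lam : ℝ) : ℝ :=
  Real.arcsin (Real.sqrt (1 - lam^2 * Real.cos x ^ 2))

/-- integrand of the moment of the resistance force for `0 < λ ≤ 1`. -/
noncomputable def cI (lam : ℝ) (p : ℝ × ℝ) : ℝ :=
  -((3/8) * ((lam * Real.sin p.1 + Real.sin (zeta p.1 lam))^3 / Real.sin (zeta p.1 lam)) *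
    (Real.sin p.1 + Real.sin p.2))

/-- integrand of the moment of the resistance force for `λ > 1`
(including the characteristic function `χ_{x ≥ arccos(1/λ)}`). -/
noncomputable def cI' (lam : ℝ) (p : ℝ × ℝ) : ℝ :=
  if Real.arccos (1/lam) ≤ p.1 then
    -((3/4) * ((lam^3 * Real.sin p.1 ^ 3 + 3 * lam * Real.sin p.1 * Real.sin (zeta p.1 lam) ^ 2)
        / Real.sin (zeta p.1 lam)) * (Real.sin p.1 + Real.sin p.2))
  else 0

/-- the normalized moment of resistance `R_I[ν, λ]`. -/
noncomputable def RI (ν : Measure (ℝ × ℝ)) (lam : ℝ) : ℝ :=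
  if lam ≤ 1 then ∫ p, cI lam p ∂ν else ∫ p, cI' lam p ∂ν


/-!
The density factorises, so `ν_⊗ = ½ (γ ⊗ γ)` with `γ(univ) = 2`; this gives the marginals and
the swap symmetry. Both integrands of `R_I` have the form `g x * (sin x + sin y)`, and Fubini with
`∫ sin dγ = 0` reduces `R_I` to `∫ g x * sin x * cos x dx`. With `σ = sin ζ = √(1 - λ² cos² x)`
(so `σσ' = λ² sin x cos x`), this integrand is the derivative of
`-(3/8) (λ sin³ x σ + λ² sin⁴ x + (1 - λ²) sin² x / 2)` when `λ ≤ 1`, and of `-(3/4) λ sin³ x σ`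
on `[arccos (1/λ), π/2]` when `λ > 1`, where `σ` vanishes at the left end. Both differences of
boundary values are `-3λ/4`.
-/

open Set ENNReal

lemma gammaM_eq_withDensity_toNNReal :
    gammaM = (volume.restrict (Icc (-(π/2)) (π/2))).withDensity
      (fun φ => ((cos φ).toNNReal : ℝ≥0∞)) := rfl

instance : IsFiniteMeasure gammaM :=
  isFiniteMeasure_withDensity_ofReal continuous_cos.integrableOn_Icc.hasFiniteIntegral

lemma integral_gammaM (f : ℝ → ℝ) :
    ∫ x, f x ∂gammaM = ∫ x in Icc (-(π/2)) (π/2), cos x * f x := by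
  rw [gammaM_eq_withDensity_toNNReal, integral_withDensity_eq_integral_smul (by fun_prop)]
  refine setIntegral_congr_fun measurableSet_Icc fun x hx => ?_
  rw [NNReal.smul_def, Real.coe_toNNReal _ (cos_nonneg_of_mem_Icc hx), smul_eq_mul]

lemma integrable_gammaM_iff {f : ℝ → ℝ} :
    Integrable f gammaM ↔ IntegrableOn (fun x => cos x * f x) (Icc (-(π/2)) (π/2)) := by
  rw [gammaM_eq_withDensity_toNNReal, integrable_withDensity_iff_integrable_smul (by fun_prop)]
  refine integrableOn_congr_fun (fun x hx => ?_) measurableSet_Icc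
  rw [NNReal.smul_def, Real.coe_toNNReal _ (cos_nonneg_of_mem_Icc hx), smul_eq_mul]

lemma integral_cos_Icc : ∫ x in Icc (-(π/2)) (π/2), cos x = 2 := by
  rw [integral_Icc_eq_integral_Ioc, ← intervalIntegral.integral_of_le (by linarith [pi_pos]),
    integral_cos]
  norm_num

lemma gammaM_univ : gammaM univ = 2 := by
  rw [gammaM, withDensity_apply _ MeasurableSet.univ, Measure.restrict_univ,
    ← ofReal_integral_eq_lintegral_ofReal continuous_cos.integrableOn_Icc
      ((ae_restrict_mem measurableSet_Icc).mono fun x hx => cos_nonneg_of_mem_Icc hx),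
    integral_cos_Icc, ofReal_ofNat]

lemma nuProd_eq_smul_prod : nuProd = (2⁻¹ : ℝ≥0∞) • gammaM.prod gammaM := by
  rw [nuProd, gammaM, prod_withDensity (by fun_prop) (by fun_prop), Measure.prod_restrict,
    ← Measure.volume_eq_prod, ← withDensity_smul _ (by fun_prop)]
  refine withDensity_congr_ae ?_
  filter_upwards [ae_restrict_mem (measurableSet_Icc.prod measurableSet_Icc)] with p hp
  rw [Pi.smul_apply, smul_eq_mul, ← ENNReal.ofReal_mul (cos_nonneg_of_mem_Icc hp.1),
    ← ofReal_ofNat, ← ofReal_inv_of_pos two_pos, ← ENNReal.ofReal_mul (by norm_num), one_div,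
    mul_assoc]

lemma map_fst_nuProd : nuProd.map Prod.fst = gammaM := by
  rw [nuProd_eq_smul_prod, Measure.map_smul, Measure.map_fst_prod, gammaM_univ, smul_smul,
    ENNReal.inv_mul_cancel two_ne_zero ofNat_ne_top, one_smul]

lemma map_snd_nuProd : nuProd.map Prod.snd = gammaM := by
  rw [nuProd_eq_smul_prod, Measure.map_smul, Measure.map_snd_prod, gammaM_univ, smul_smul,
    ENNReal.inv_mul_cancel two_ne_zero ofNat_ne_top, one_smul]

lemma map_swap_nuProd : nuProd.map Prod.swap = nuProd := by
  rw [nuProd_eq_smul_prod, Measure.map_smul, Measure.prod_swap]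

lemma integral_sin_gammaM : ∫ x, sin x ∂gammaM = 0 := by
  have hderiv : ∀ x ∈ uIcc (-(π/2)) (π/2), HasDerivAt (fun t => sin t ^ 2 / 2) (cos x * sin x) x :=
    fun x _ => (((hasDerivAt_sin x).fun_pow 2).div_const 2).congr_deriv (by push_cast; ring)
  rw [integral_gammaM, integral_Icc_eq_integral_Ioc,
    ← intervalIntegral.integral_of_le (by linarith [pi_pos]),
    intervalIntegral.integral_eq_sub_of_hasDerivAt hderiv
      ((continuous_cos.mul continuous_sin).intervalIntegrable _ _)]
  simp

lemma integrable_sin_gammaM : Integrable sin gammaM :=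
  .of_bound (by fun_prop) 1 (ae_of_all _ fun x => abs_sin_le_one x)

lemma integral_nuProd_mul_sin_add {g : ℝ → ℝ} (hg : Integrable g gammaM) :
    ∫ p, g p.1 * (sin p.1 + sin p.2) ∂nuProd = ∫ x, g x * sin x ∂gammaM := by
  have hgsin : Integrable (fun x => g x * sin x) gammaM :=
    hg.mul_bdd (by fun_prop) (ae_of_all _ fun x => abs_sin_le_one x)
  have hsplit : (fun p : ℝ × ℝ => g p.1 * (sin p.1 + sin p.2))
      = fun p => g p.1 * sin p.1 * 1 + g p.1 * sin p.2 := by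
    ext p; ring
  have hfirst : ∫ p, g p.1 * sin p.1 * 1 ∂gammaM.prod gammaM
      = (∫ x, g x * sin x ∂gammaM) * ∫ _, 1 ∂gammaM :=
    integral_prod_mul (fun x => g x * sin x) (fun _ : ℝ => (1 : ℝ))
  rw [nuProd_eq_smul_prod, integral_smul_measure, hsplit,
    integral_add (hgsin.mul_prod (integrable_const 1)) (hg.mul_prod integrable_sin_gammaM),
    hfirst, integral_prod_mul g, integral_sin_gammaM, integral_const, measureReal_def, gammaM_univ]
  simp only [toReal_inv, toReal_ofNat, smul_eq_mul, mul_zero, add_zero]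
  ring

lemma sin_zeta (x lam : ℝ) : sin (zeta x lam) = √(1 - lam ^ 2 * cos x ^ 2) :=
  sin_arcsin (by linarith [sqrt_nonneg (1 - lam ^ 2 * cos x ^ 2)])
    (sqrt_le_one.mpr (by nlinarith [sq_nonneg (lam * cos x)]))

lemma continuous_sin_zeta (lam : ℝ) : Continuous fun x => sin (zeta x lam) := by
  simp only [sin_zeta]; fun_prop

lemma hasDerivAt_sin_zeta {lam x : ℝ} (h : 0 < 1 - lam ^ 2 * cos x ^ 2) :
    HasDerivAt (fun t => sin (zeta t lam)) (lam ^ 2 * cos x * sin x / sin (zeta x lam)) x := by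
  simp only [sin_zeta]
  have hinner : HasDerivAt (fun t => 1 - lam ^ 2 * cos t ^ 2) (2 * lam ^ 2 * cos x * sin x) x :=
    (((hasDerivAt_cos x).fun_pow 2).const_mul (lam ^ 2)).const_sub 1 |>.congr_deriv
      (by push_cast; ring)
  refine (hinner.sqrt h.ne').congr_deriv ?_
  field_simp

lemma sin_zeta_sq {lam x : ℝ} (h : 0 ≤ 1 - lam ^ 2 * cos x ^ 2) :
    sin (zeta x lam) ^ 2 = 1 - lam ^ 2 * cos x ^ 2 := by
  rw [sin_zeta, sq_sqrt h]

noncomputable def cIFactor (lam x : ℝ) : ℝ :=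
  -((3/8) * ((lam * sin x + sin (zeta x lam)) ^ 3 / sin (zeta x lam)))

lemma cI_eq_cIFactor_mul (lam : ℝ) (p : ℝ × ℝ) :
    cI lam p = cIFactor lam p.1 * (sin p.1 + sin p.2) := by
  rw [cI, cIFactor]; ring

lemma abs_add_pow_three_div_le {a s : ℝ} (ha : |a| ≤ s) (hs : s ≤ 1) :
    |(a + s) ^ 3 / s| ≤ 8 := by
  rcases (abs_nonneg a |>.trans ha).eq_or_lt with rfl | hs0
  · simp
  rw [abs_div, abs_pow, abs_of_pos hs0, div_le_iff₀ hs0]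
  have hsum : |a + s| ≤ 2 * s := (abs_add_le a s).trans (by rw [abs_of_pos hs0]; linarith)
  calc |a + s| ^ 3 ≤ (2 * s) ^ 3 := pow_le_pow_left₀ (abs_nonneg _) hsum 3
    _ ≤ 8 * s := by nlinarith [mul_pos hs0 hs0]

lemma abs_cIFactor_le {lam : ℝ} (hl : lam ^ 2 ≤ 1) (x : ℝ) : |cIFactor lam x| ≤ 3 := by
  have hsin : |lam * sin x| ≤ sin (zeta x lam) := by
    rw [← sqrt_sq_eq_abs, sin_zeta]
    exact sqrt_le_sqrt (by nlinarith [sin_sq_add_cos_sq x])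
  have hle_one : sin (zeta x lam) ≤ 1 := sin_le_one _
  rw [cIFactor, abs_neg, abs_mul, abs_of_pos (by norm_num : (0:ℝ) < 3/8)]
  linarith [abs_add_pow_three_div_le hsin hle_one]

lemma integrable_cIFactor {lam : ℝ} (hl : lam ^ 2 ≤ 1) : Integrable (cIFactor lam) gammaM := by
  have hmeas : Measurable (cIFactor lam) := by
    have := (continuous_sin_zeta lam).measurable
    unfold cIFactor; fun_prop
  exact .of_bound hmeas.aestronglyMeasurable 3 (ae_of_all _ (abs_cIFactor_le hl))

lemma hasDerivAt_cIFactor_primitive {lam x : ℝ} (h : 0 < 1 - lam ^ 2 * cos x ^ 2) :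
    HasDerivAt (fun t => -(3/8) * (lam * sin t ^ 3 * sin (zeta t lam) + lam ^ 2 * sin t ^ 4
        + (1 - lam ^ 2) * sin t ^ 2 / 2))
      (cos x * (cIFactor lam x * sin x)) x := by
  have hσ : 0 < sin (zeta x lam) := by rw [sin_zeta]; exact sqrt_pos.2 h
  have hσsq := sin_zeta_sq h.le
  have hsin (n : ℕ) := (hasDerivAt_sin x).fun_pow n
  refine (((((hsin 3).const_mul lam).fun_mul (hasDerivAt_sin_zeta h)).fun_add
    ((hsin 4).const_mul (lam ^ 2))).fun_add (((hsin 2).const_mul (1 - lam ^ 2)).div_const 2)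
    |>.const_mul (-(3/8))).congr_deriv ?_
  rw [cIFactor]
  field_simp
  push_cast
  linear_combination (2 * cos x * sin (zeta x lam) * sin x) * hσsq
    - (2 * cos x * sin (zeta x lam) * sin x * lam ^ 2) * sin_sq_add_cos_sq x

lemma integral_cIFactor_mul_sin {lam : ℝ} (hl : lam ^ 2 ≤ 1) :
    ∫ x, cIFactor lam x * sin x ∂gammaM = -(3 * lam / 4) := by
  -- For `λ = 1` the square root `sin (zeta x λ) = |sin x|` vanishes at `x = 0`.
  have hpos : ∀ x ∈ Ioo (-(π/2)) (π/2) \ {0}, 0 < 1 - lam ^ 2 * cos x ^ 2 := by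
    rintro x ⟨⟨hx₁, hx₂⟩, hx₀⟩
    have hs : sin x ≠ 0 := fun h =>
      hx₀ ((sin_eq_zero_iff_of_lt_of_lt (by linarith) (by linarith)).1 h)
    nlinarith [sin_sq_add_cos_sq x, sq_pos_of_ne_zero hs, sq_nonneg (cos x)]
  have hint : IntegrableOn (fun x => cos x * (cIFactor lam x * sin x)) (Icc (-(π/2)) (π/2)) :=
    integrable_gammaM_iff.1 <| (integrable_cIFactor hl).mul_bdd (by fun_prop)
      (ae_of_all _ fun x => abs_sin_le_one x)
  have hle : -(π/2) ≤ π/2 := by linarith [pi_pos]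
  rw [integral_gammaM, integral_Icc_eq_integral_Ioc, ← intervalIntegral.integral_of_le hle,
    integral_eq_of_hasDerivAt_off_countable_of_le _ _ hle (countable_singleton 0)
      (by have := continuous_sin_zeta lam; fun_prop)
      (fun x hx => hasDerivAt_cIFactor_primitive (hpos x hx))
      ((intervalIntegrable_iff_integrableOn_Icc_of_le hle).2 hint)]
  simp [sin_zeta]
  ring

noncomputable def cI'Factor (lam x : ℝ) : ℝ :=
  -((3/4) * ((lam ^ 3 * sin x ^ 3 + 3 * lam * sin x * sin (zeta x lam) ^ 2) / sin (zeta x lam)))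

lemma cI'_eq_indicator_mul (lam : ℝ) (p : ℝ × ℝ) :
    cI' lam p = (Ici (arccos (1/lam))).indicator (cI'Factor lam) p.1 * (sin p.1 + sin p.2) := by
  by_cases h : arccos (1/lam) ≤ p.1
  · rw [cI', if_pos h, indicator_of_mem (mem_Ici.2 h), cI'Factor]; ring
  · rw [cI', if_neg h, indicator_of_notMem (fun h' => h (mem_Ici.1 h')), zero_mul]

lemma hasDerivAt_cI'Factor_primitive {lam x : ℝ} (h : 0 < 1 - lam ^ 2 * cos x ^ 2) :
    HasDerivAt (fun t => -(3/4) * lam * sin t ^ 3 * sin (zeta t lam))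
      (cos x * (cI'Factor lam x * sin x)) x := by
  have hσ : 0 < sin (zeta x lam) := by rw [sin_zeta]; exact sqrt_pos.2 h
  refine ((((hasDerivAt_sin x).fun_pow 3).const_mul (-(3/4) * lam)).fun_mul
    (hasDerivAt_sin_zeta h)).congr_deriv ?_
  rw [cI'Factor]
  field_simp
  push_cast
  ring

lemma cos_mul_cI'Factor_mul_sin_nonpos {lam x : ℝ} (hl : 0 ≤ lam) (hx : x ∈ Icc 0 (π/2)) :
    cos x * (cI'Factor lam x * sin x) ≤ 0 := by
  have hs : 0 ≤ sin x := sin_nonneg_of_nonneg_of_le_pi hx.1 (by linarith [hx.2, pi_pos])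
  have hc : 0 ≤ cos x := cos_nonneg_of_mem_Icc ⟨by linarith [hx.1, pi_pos], hx.2⟩
  have hσ : 0 ≤ sin (zeta x lam) := by rw [sin_zeta]; exact sqrt_nonneg _
  have hfactor : cI'Factor lam x ≤ 0 := by
    rw [cI'Factor, neg_nonpos]; positivity
  exact mul_nonpos_of_nonneg_of_nonpos hc (mul_nonpos_of_nonpos_of_nonneg hfactor hs)

section LambdaGtOne

variable {lam : ℝ} (hl : 1 < lam)
include hl

lemma arccos_inv_mem_Ioo : arccos (1/lam) ∈ Ioo 0 (π/2) :=
  ⟨arccos_pos.2 ((div_lt_one (by linarith)).2 hl), arccos_lt_pi_div_two.2 (by positivity)⟩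

lemma cos_arccos_inv : cos (arccos (1/lam)) = 1/lam :=
  cos_arccos (by linarith [one_div_pos.2 (by linarith : 0 < lam)])
    ((div_le_one (by linarith)).2 hl.le)

lemma sin_zeta_arccos_inv : sin (zeta (arccos (1/lam)) lam) = 0 := by
  rw [sin_zeta, cos_arccos_inv hl]
  field_simp
  simp

lemma one_sub_sq_mul_cos_sq_pos {x : ℝ} (hx : x ∈ Ioo (arccos (1/lam)) (π/2)) :
    0 < 1 - lam ^ 2 * cos x ^ 2 := by
  have hx₀ := arccos_inv_mem_Ioo hl
  have hlt : cos x < 1/lam := by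
    rw [← cos_arccos_inv hl]
    exact cos_lt_cos_of_nonneg_of_le_pi hx₀.1.le (by linarith [hx.2, pi_pos]) hx.1
  have hc : 0 ≤ cos x := cos_nonneg_of_mem_Icc ⟨by linarith [hx₀.1, hx.1, pi_pos], hx.2.le⟩
  have hlc : lam * cos x < 1 := by rwa [lt_div_iff₀' (by linarith)] at hlt
  nlinarith [mul_nonneg (by linarith : 0 ≤ lam) hc]

lemma integrableOn_cos_mul_cI'Factor_mul_sin :
    IntegrableOn (fun x => cos x * (cI'Factor lam x * sin x)) (Icc (arccos (1/lam)) (π/2)) := by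
  have hx₀ := arccos_inv_mem_Ioo hl
  rw [integrableOn_Icc_iff_integrableOn_Ioc]
  refine (intervalIntegral.integrableOn_deriv_of_nonneg
    (g := fun t => -(-(3/4) * lam * sin t ^ 3 * sin (zeta t lam)))
    (by have := continuous_sin_zeta lam; fun_prop)
    (fun x hx => (hasDerivAt_cI'Factor_primitive (one_sub_sq_mul_cos_sq_pos hl hx)).neg)
    (fun x hx => neg_nonneg.2 (cos_mul_cI'Factor_mul_sin_nonpos (by linarith)
      ⟨by linarith [hx₀.1, hx.1], hx.2.le⟩))).neg.congr_fun (fun x _ => neg_neg _)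
    measurableSet_Ioc

lemma integral_cos_mul_cI'Factor_mul_sin :
    ∫ x in arccos (1/lam)..π/2, cos x * (cI'Factor lam x * sin x) = -(3 * lam / 4) := by
  have hle := (arccos_inv_mem_Ioo hl).2.le
  rw [intervalIntegral.integral_eq_sub_of_hasDerivAt_of_le hle
    (by have := continuous_sin_zeta lam; fun_prop)
    (fun x hx => hasDerivAt_cI'Factor_primitive (one_sub_sq_mul_cos_sq_pos hl hx))
    ((intervalIntegrable_iff_integrableOn_Icc_of_le hle).2
      (integrableOn_cos_mul_cI'Factor_mul_sin hl)),
    sin_zeta_arccos_inv hl]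
  simp [sin_zeta]
  ring

lemma Ici_arccos_inv_inter_Icc :
    Ici (arccos (1/lam)) ∩ Icc (-(π/2)) (π/2) = Icc (arccos (1/lam)) (π/2) := by
  have hx₀ := arccos_inv_mem_Ioo hl
  ext x
  exact ⟨fun ⟨h₁, _, h₂⟩ => ⟨h₁, h₂⟩, fun ⟨h₁, h₂⟩ => ⟨h₁, by linarith [pi_pos, hx₀.1], h₂⟩⟩

lemma integrable_indicator_cI'Factor :
    Integrable ((Ici (arccos (1/lam))).indicator (cI'Factor lam)) gammaM := by
  have hx₀ := arccos_inv_mem_Ioo hl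
  have hsin : ∀ x ∈ Icc (arccos (1/lam)) (π/2), 0 < sin x := fun x hx =>
    sin_pos_of_pos_of_lt_pi (hx₀.1.trans_le hx.1) (by linarith [hx.2, pi_pos])
  simp_rw [integrable_gammaM_iff, ← indicator_mul_right]
  rw [integrableOn_indicator_iff measurableSet_Ici, Ici_arccos_inv_inter_Icc hl]
  -- On this interval `sin x ≥ sin (arccos (1/λ)) > 0`, so dividing by `sin` keeps integrability.
  refine ((integrableOn_cos_mul_cI'Factor_mul_sin hl).mul_continuousOn
    (continuousOn_sin.inv₀ fun x hx => (hsin x hx).ne') isCompact_Icc).congr_fun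
    (fun x hx => ?_) measurableSet_Icc
  simp only [Pi.inv_apply]
  rw [← mul_assoc, mul_inv_cancel_right₀ (hsin x hx).ne']

lemma integral_indicator_cI'Factor_mul_sin :
    ∫ x, (Ici (arccos (1/lam))).indicator (cI'Factor lam) x * sin x ∂gammaM
      = -(3 * lam / 4) := by
  simp_rw [integral_gammaM, ← indicator_mul_left, ← indicator_mul_right]
  rw [setIntegral_indicator measurableSet_Ici, inter_comm, Ici_arccos_inv_inter_Icc hl,
    integral_Icc_eq_integral_Ioc, ← intervalIntegral.integral_of_le (arccos_inv_mem_Ioo hl).2.le,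
    integral_cos_mul_cI'Factor_mul_sin hl]

end LambdaGtOne

theorem stmt_12 :
    nuProd.map Prod.fst = gammaM ∧
    nuProd.map Prod.snd = gammaM ∧
    nuProd.map Prod.swap = nuProd ∧
    ∀ lam : ℝ, 0 < lam → RI nuProd lam = -(3 * lam / 4) := by
  refine ⟨map_fst_nuProd, map_snd_nuProd, map_swap_nuProd, fun lam hl0 => ?_⟩
  rw [RI]
  split_ifs with hl
  · have hsq : lam ^ 2 ≤ 1 := by nlinarith
    simp_rw [cI_eq_cIFactor_mul]
    rw [integral_nuProd_mul_sin_add (integrable_cIFactor hsq), integral_cIFactor_mul_sin hsq]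
  · have hl : 1 < lam := not_le.1 hl
    simp_rw [cI'_eq_indicator_mul]
    rw [integral_nuProd_mul_sin_add (integrable_indicator_cI'Factor hl),
      integral_indicator_cI'Factor_mul_sin hl]
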